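/- If μ is a random variable with density Q(μ) = [2μ − √π·e^{μ²}·(1−2μ²)·erf(μ)]·e^{−2μ²} on [0,∞), then its even moments satisfy E[μ^{2n}] = (n!/2^n)·[1 + 2^{n+1}·n·₂F₁(1+n, 1/2; 3/2; −1)]. -/

import Mathlib

open MeasureTheory Real

/-- The error function. -/
noncomputable def erf (x : ℝ) : ℝ := (2 / Real.sqrt π) * ∫ t in (0:ℝ)..x, Real.exp (-t ^ 2)

/-- The Gauss hypergeometric function ₂F₁(a, 1/2; 3/2; z), via its Euler-type integral
representation `∫₀¹ (1 - z t²)^(-a) dt`, which agrees with the analytic continuation of the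
hypergeometric series for negative real argument `z`. -/
noncomputable def hyp2F1half (a z : ℝ) : ℝ := ∫ t in (0:ℝ)..1, (1 - z * t ^ 2) ^ (-a)

/-- The probability density of the sum μ = r + s. -/
noncomputable def Q (μ : ℝ) : ℝ :=
  (2 * μ - Real.sqrt π * Real.exp (μ ^ 2) * (1 - 2 * μ ^ 2) * erf μ) * Real.exp (-2 * μ ^ 2)

/-!
Since `d/dμ erf μ = (2/√π) e^{-μ²}`, the density satisfies
`μ^{2n} Q μ = 4 μ^{2n+1} e^{-2μ²} + 2n√π μ^{2n} e^{-μ²} erf μ - (√π μ^{2n+1} e^{-μ²} erf μ)'`,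
and the derivative term integrates to zero over `(0, ∞)`. The first term is a Gamma integral worth
`n!/2^n`. For the second, substituting `t = μ s` gives `erf μ = (2/√π) μ ∫₀¹ e^{-μ²s²} ds`;
after swapping the integrals the inner one is the Gaussian moment `n!/(2(1+s²)^{n+1})`,
and `∫₀¹ (1+s²)^{-(n+1)} ds` is the Euler integral `₂F₁(1+n, 1/2; 3/2; -1)`.
-/

open Set Filter Topology
open scoped Nat

section Gaussian

variable {b : ℝ}

theorem integrableOn_pow_mul_exp_neg_mul_sq (hb : 0 < b) (m : ℕ) :
    IntegrableOn (fun x : ℝ => x ^ m * exp (-b * x ^ 2)) (Ioi 0) := by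
  have hm : (-1 : ℝ) < m := by linarith [m.cast_nonneg (α := ℝ)]
  simpa [rpow_natCast] using integrableOn_rpow_mul_exp_neg_mul_sq hb hm

theorem tendsto_pow_mul_exp_neg_mul_sq_atTop (hb : 0 < b) (m : ℕ) :
    Tendsto (fun x : ℝ => x ^ m * exp (-b * x ^ 2)) atTop (𝓝 0) := by
  simpa [rpow_natCast] using
    (rpow_mul_exp_neg_mul_sq_isLittleO_exp_neg hb m).tendsto_zero_of_tendsto
      (tendsto_exp_atBot.comp <| tendsto_id.const_mul_atTop_of_neg (neg_lt_zero.mpr one_half_pos))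

theorem integral_pow_mul_exp_neg_mul_sq_odd (hb : 0 < b) (k : ℕ) :
    ∫ x in Ioi (0 : ℝ), x ^ (2 * k + 1) * exp (-b * x ^ 2) = k ! / (2 * b ^ (k + 1)) := by
  have h := integral_rpow_mul_exp_neg_mul_rpow two_pos (by linarith [k.cast_nonneg (α := ℝ)] :
    (-1 : ℝ) < 2 * k + 1) hb
  rw [show (2 * k + 1 + 1) / 2 = (k : ℝ) + 1 by ring, Gamma_nat_eq_factorial,
    show -((2 * k + 1 : ℝ) + 1) / 2 = -((k + 1 : ℕ) : ℝ) by push_cast; ring,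
    rpow_neg hb.le, rpow_natCast] at h
  simp only [rpow_two, show (2 * k + 1 : ℝ) = ((2 * k + 1 : ℕ) : ℝ) by push_cast; ring,
    rpow_natCast] at h
  rw [h]
  field_simp

end Gaussian

theorem hasDerivAt_erf (x : ℝ) : HasDerivAt erf (2 / √π * exp (-x ^ 2)) x :=
  ((by fun_prop : Continuous fun t : ℝ => exp (-t ^ 2)).integral_hasStrictDerivAt 0 x
    |>.hasDerivAt.const_mul _)

@[fun_prop]
theorem continuous_erf : Continuous erf :=
  continuous_iff_continuousAt.2 fun x => (hasDerivAt_erf x).continuousAt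

@[simp] theorem erf_zero : erf 0 = 0 := by simp [erf]

theorem erf_nonneg {x : ℝ} (hx : 0 ≤ x) : 0 ≤ erf x :=
  mul_nonneg (by positivity) (intervalIntegral.integral_nonneg hx fun t _ => (exp_pos _).le)

theorem erf_le_two_div_sqrt_pi_mul {x : ℝ} (hx : 0 ≤ x) : erf x ≤ 2 / √π * x := by
  refine mul_le_mul_of_nonneg_left ?_ (by positivity)
  calc ∫ t in (0 : ℝ)..x, exp (-t ^ 2) ≤ ∫ t in (0 : ℝ)..x, (1 : ℝ) :=
        intervalIntegral.integral_mono_on hx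
          ((by fun_prop : Continuous fun t : ℝ => exp (-t ^ 2)).intervalIntegrable _ _)
          intervalIntegrable_const fun t _ => exp_le_one_iff.2 (by nlinarith)
    _ = x := by simp

theorem erf_eq_integral_unitInterval (x : ℝ) :
    erf x = 2 / √π * ∫ s in (0 : ℝ)..1, x * exp (-(x * s) ^ 2) := by
  have h := intervalIntegral.smul_integral_comp_mul_left (fun t : ℝ => exp (-t ^ 2)) x
    (a := 0) (b := 1)
  simp only [mul_zero, mul_one, smul_eq_mul] at h
  rw [erf, ← h, intervalIntegral.integral_const_mul]

theorem pow_mul_exp_neg_sq_mul_erf_le (m : ℕ) {x : ℝ} (hx : 0 ≤ x) :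
    x ^ m * exp (-x ^ 2) * erf x ≤ 2 / √π * (x ^ (m + 1) * exp (-1 * x ^ 2)) :=
  calc x ^ m * exp (-x ^ 2) * erf x ≤ x ^ m * exp (-x ^ 2) * (2 / √π * x) :=
        mul_le_mul_of_nonneg_left (erf_le_two_div_sqrt_pi_mul hx) (by positivity)
    _ = 2 / √π * (x ^ (m + 1) * exp (-1 * x ^ 2)) := by ring_nf

theorem integrableOn_pow_mul_exp_neg_sq_mul_erf (m : ℕ) :
    IntegrableOn (fun x : ℝ => x ^ m * exp (-x ^ 2) * erf x) (Ioi 0) := by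
  refine ((integrableOn_pow_mul_exp_neg_mul_sq one_pos (m + 1)).const_mul (2 / √π)).mono'
    (by fun_prop : Continuous fun x : ℝ => x ^ m * exp (-x ^ 2) * erf x).aestronglyMeasurable ?_
  filter_upwards [ae_restrict_mem measurableSet_Ioi] with x (hx : 0 < x)
  rw [norm_of_nonneg (mul_nonneg (by positivity) (erf_nonneg hx.le))]
  exact pow_mul_exp_neg_sq_mul_erf_le m hx.le

theorem tendsto_pow_mul_exp_neg_sq_mul_erf_atTop (m : ℕ) :
    Tendsto (fun x : ℝ => x ^ m * exp (-x ^ 2) * erf x) atTop (𝓝 0) := by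
  have hbound := (tendsto_pow_mul_exp_neg_mul_sq_atTop one_pos (m + 1)).const_mul (2 / √π)
  rw [mul_zero] at hbound
  refine squeeze_zero' ?_ ?_ hbound
  · filter_upwards [eventually_ge_atTop 0] with x hx
    exact mul_nonneg (by positivity) (erf_nonneg hx)
  · filter_upwards [eventually_ge_atTop 0] with x hx
    exact pow_mul_exp_neg_sq_mul_erf_le m hx

theorem integrable_pow_mul_exp_neg_one_add_sq_mul_sq (m : ℕ) :
    Integrable (fun p : ℝ × ℝ => p.2 ^ m * exp (-(1 + p.1 ^ 2) * p.2 ^ 2))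
      ((volume.restrict (uIoc 0 1)).prod (volume.restrict (Ioi 0))) := by
  have : IsFiniteMeasure (volume.restrict (uIoc (0 : ℝ) 1)) :=
    isFiniteMeasure_restrict.2 (by simp)
  refine ((integrable_const (1 : ℝ)).mul_prod
    (integrableOn_pow_mul_exp_neg_mul_sq one_pos m).norm).mono'
    (by fun_prop : Continuous fun p : ℝ × ℝ =>
      p.2 ^ m * exp (-(1 + p.1 ^ 2) * p.2 ^ 2)).aestronglyMeasurable
    (Eventually.of_forall fun p => ?_)
  rw [one_mul, norm_mul, norm_mul, norm_of_nonneg (exp_pos _).le, norm_of_nonneg (exp_pos _).le]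
  gcongr
  nlinarith [sq_nonneg p.1, sq_nonneg p.2, mul_nonneg (sq_nonneg p.1) (sq_nonneg p.2)]

theorem integral_pow_mul_exp_neg_sq_mul_erf (n : ℕ) :
    ∫ x in Ioi (0 : ℝ), x ^ (2 * n) * exp (-x ^ 2) * erf x
      = n ! / √π * hyp2F1half (1 + n) (-1) := by
  have hinner : ∀ s : ℝ, (1 - -1 * s ^ 2) ^ (-(1 + n : ℝ)) * (n ! / 2)
      = ∫ x in Ioi (0 : ℝ), x ^ (2 * n + 1) * exp (-(1 + s ^ 2) * x ^ 2) := by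
    intro s
    rw [integral_pow_mul_exp_neg_mul_sq_odd (by positivity),
      show 1 - -1 * s ^ 2 = 1 + s ^ 2 by ring,
      show (1 + n : ℝ) = ((n + 1 : ℕ) : ℝ) by push_cast; ring, rpow_neg (by positivity),
      rpow_natCast]
    field_simp
  calc ∫ x in Ioi (0 : ℝ), x ^ (2 * n) * exp (-x ^ 2) * erf x
      = ∫ x in Ioi (0 : ℝ), 2 / √π * ∫ s in (0 : ℝ)..1,
          x ^ (2 * n + 1) * exp (-(1 + s ^ 2) * x ^ 2) := by
        refine setIntegral_congr_fun measurableSet_Ioi fun x _ => ?_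
        simp only [erf_eq_integral_unitInterval, ← intervalIntegral.integral_const_mul]
        refine intervalIntegral.integral_congr fun s _ => ?_
        rw [show -(1 + s ^ 2) * x ^ 2 = -x ^ 2 + -(x * s) ^ 2 by ring, exp_add]
        ring
    _ = 2 / √π * ∫ s in (0 : ℝ)..1, ∫ x in Ioi (0 : ℝ),
          x ^ (2 * n + 1) * exp (-(1 + s ^ 2) * x ^ 2) := by
        rw [integral_const_mul, intervalIntegral_integral_swap
          (integrable_pow_mul_exp_neg_one_add_sq_mul_sq _)]
    _ = n ! / √π * hyp2F1half (1 + n) (-1) := by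
        simp only [← hinner, hyp2F1half, intervalIntegral.integral_mul_const]
        ring

theorem Q_eq (μ : ℝ) :
    Q μ = 2 * μ * exp (-2 * μ ^ 2) - √π * (1 - 2 * μ ^ 2) * exp (-μ ^ 2) * erf μ := by
  rw [Q, show -μ ^ 2 = μ ^ 2 + -2 * μ ^ 2 by ring, exp_add]
  ring

theorem integrableOn_pow_mul_Q (m : ℕ) : IntegrableOn (fun μ => μ ^ m * Q μ) (Ioi 0) := by
  have h : IntegrableOn (fun μ => 2 * (μ ^ (m + 1) * exp (-2 * μ ^ 2))
      - √π * (μ ^ m * exp (-μ ^ 2) * erf μ)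
      + 2 * √π * (μ ^ (m + 2) * exp (-μ ^ 2) * erf μ)) (Ioi 0) :=
    (((integrableOn_pow_mul_exp_neg_mul_sq two_pos _).const_mul _).sub
      ((integrableOn_pow_mul_exp_neg_sq_mul_erf _).const_mul _)).add
      ((integrableOn_pow_mul_exp_neg_sq_mul_erf _).const_mul _)
  exact h.congr_fun (fun μ _ => by rw [Q_eq]; ring) measurableSet_Ioi

theorem hasDerivAt_sqrt_pi_mul_pow_mul_exp_neg_sq_mul_erf (n : ℕ) (μ : ℝ) :
    HasDerivAt (fun μ => √π * (μ ^ (2 * n + 1) * exp (-μ ^ 2) * erf μ))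
      (4 * (μ ^ (2 * n + 1) * exp (-2 * μ ^ 2))
        + 2 * n * √π * (μ ^ (2 * n) * exp (-μ ^ 2) * erf μ) - μ ^ (2 * n) * Q μ) μ := by
  have hexp : HasDerivAt (fun μ : ℝ => exp (-μ ^ 2)) (-2 * μ * exp (-μ ^ 2)) μ := by
    simpa [mul_comm] using ((hasDerivAt_pow 2 μ).neg).exp
  refine ((((hasDerivAt_pow (2 * n + 1) μ).mul hexp).mul (hasDerivAt_erf μ)).const_mul
    √π).congr_deriv ?_
  simp only [Pi.mul_apply]
  rw [Q_eq, show -2 * μ ^ 2 = -μ ^ 2 + -μ ^ 2 by ring, exp_add]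
  have : √π ≠ 0 := by positivity
  push_cast
  field_simp
  ring

theorem stmt_16 (n : ℕ) :
    ∫ μ in Set.Ioi (0:ℝ), μ ^ (2 * n) * Q μ =
      ((n : ℕ).factorial / 2 ^ n) *
        (1 + 2 ^ (n + 1) * n * hyp2F1half (1 + n) (-1)) := by
  set f := fun μ : ℝ => 4 * (μ ^ (2 * n + 1) * exp (-2 * μ ^ 2))
    + 2 * n * √π * (μ ^ (2 * n) * exp (-μ ^ 2) * erf μ)
  have hf : IntegrableOn f (Ioi 0) :=
    ((integrableOn_pow_mul_exp_neg_mul_sq two_pos _).const_mul _).add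
      ((integrableOn_pow_mul_exp_neg_sq_mul_erf _).const_mul _)
  have hFTC : ∫ μ in Ioi (0 : ℝ), (f μ - μ ^ (2 * n) * Q μ) = 0 := by
    rw [integral_Ioi_of_hasDerivAt_of_tendsto'
      (fun μ _ => hasDerivAt_sqrt_pi_mul_pow_mul_exp_neg_sq_mul_erf n μ)
      (hf.sub (integrableOn_pow_mul_Q _))
      (by simpa using (tendsto_pow_mul_exp_neg_sq_mul_erf_atTop (2 * n + 1)).const_mul √π)]
    simp
  rw [integral_sub hf (integrableOn_pow_mul_Q _), sub_eq_zero] at hFTC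
  rw [← hFTC, integral_add ((integrableOn_pow_mul_exp_neg_mul_sq two_pos _).const_mul _)
      ((integrableOn_pow_mul_exp_neg_sq_mul_erf _).const_mul _), integral_const_mul,
    integral_const_mul, integral_pow_mul_exp_neg_mul_sq_odd two_pos,
    integral_pow_mul_exp_neg_sq_mul_erf]
  have : √π ≠ 0 := by positivity
  field_simp
  ring
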